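/- For every constant c > 4 and every integer l ≥ 1, the spider graph G_l has highway dimension 1 with respect to c: for every r > 0 and every ball B_{cr}(t), a single vertex hits all shortest paths lying inside B_{cr}(t) of length more than r. Moreover, for every c' > c, the highway dimension of G_l with respect to c' is at least l: taking r = c/c', any set of vertices in B_{c'r}(u) hitting all shortest paths lying inside B_{c'r}(u) of length more than r must contain v_i or w_i for every i ∈ {1,…,l}. -/

import Mathlib

open SimpleGraph

universe u

variable {V : Type u}

/-- The length of a walk in a graph `G` with edge lengths `len`. -/
noncomputable def wlen {G : SimpleGraph V} (len : V → V → ℝ) {u v : V} (w : G.Walk u v) : ℝ :=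
  (w.darts.map (fun e => len e.toProd.1 e.toProd.2)).sum

/-- A walk is a *shortest path* (w.r.t. the shortest-path metric `d`) if it is a
path whose total length equals the distance between its endpoints. -/
def IsShortestPath {G : SimpleGraph V} (len d : V → V → ℝ) {u v : V}
    (w : G.Walk u v) : Prop :=
  w.IsPath ∧ wlen len w = d u v

/-- `d` is the shortest-path metric of the graph `G` with edge lengths `len`:
it is a lower bound on the length of every walk, and for every pair of vertices it
is attained by some path (a shortest path). -/
def IsShortestPathMetric (G : SimpleGraph V) (len d : V → V → ℝ) : Prop :=
  (∀ (u v : V) (w : G.Walk u v), d u v ≤ wlen len w) ∧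
  (∀ u v : V, ∃ w : G.Walk u v, IsShortestPath len d w)

/-- The closed ball `B_r(v)` of radius `r` around `v` (w.r.t. `d`). -/
def cball (d : V → V → ℝ) (v : V) (r : ℝ) : Set V := {u | d u v ≤ r}

/-- A *shortest path cover* for scale `r` (with parameter `c`): a set of hubs
hitting every shortest path of length in `(r, c*r/2]`. -/
def IsSPC (G : SimpleGraph V) (len d : V → V → ℝ) (c r : ℝ) (H : Set V) : Prop :=
  ∀ (u v : V) (w : G.Walk u v), IsShortestPath len d w →
    r < wlen len w → wlen len w ≤ c * r / 2 → ∃ h ∈ H, h ∈ w.support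

/-- A minimal shortest path cover: no proper subset is a shortest path cover. -/
def IsMinimalSPC (G : SimpleGraph V) (len d : V → V → ℝ) (c r : ℝ) (H : Set V) : Prop :=
  IsSPC G len d c r H ∧ ∀ H' : Set V, H' ⊂ H → ¬ IsSPC G len d c r H'

/-- `H` is locally `s`-sparse for scale `r`: every ball of radius `c*r/2` contains
at most `s` vertices of `H`. -/
def LocallySparse (d : V → V → ℝ) (c r : ℝ) (s : ℕ) (H : Set V) : Prop :=
  ∀ v : V, (H ∩ cball d v (c * r / 2)).ncard ≤ s

/-- Definition 1: the highway dimension of `G` is at most `k` if for every scale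
`r > 0` and every ball of radius `c*r`, there are at most `k` vertices in the ball
hitting all shortest paths of length more than `r` that lie inside the ball. -/
def HighwayDimLE (G : SimpleGraph V) (len d : V → V → ℝ) (c : ℝ) (k : ℕ) : Prop :=
  ∀ r : ℝ, 0 < r → ∀ v : V, ∃ H : Set V, H ⊆ cball d v (c * r) ∧ H.ncard ≤ k ∧
    ∀ (a b : V) (w : G.Walk a b), IsShortestPath len d w →
      (∀ x ∈ w.support, x ∈ cball d v (c * r)) → r < wlen len w →
      ∃ h ∈ H, h ∈ w.support

/-- The vertex set of the spider graph: `none` is the centre `u`,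
`some (i, false)` is `v_i` and `some (i, true)` is `w_i`. -/
abbrev SpiderV (l : ℕ) := Option (Fin l × Bool)

/-- The spider graph: edges `{u, v_i}` and `{v_i, w_i}` for each `i`. -/
def spider (l : ℕ) : SimpleGraph (SpiderV l) where
  Adj a b := ∃ i : Fin l,
    (a = none ∧ b = some (i, false)) ∨ (b = none ∧ a = some (i, false)) ∨
    (a = some (i, false) ∧ b = some (i, true)) ∨
    (a = some (i, true) ∧ b = some (i, false))
  symm := by
    constructor
    rintro a b ⟨i, h⟩
    exact ⟨i, by tauto⟩
  loopless := by
    constructor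
    rintro a ⟨i, h⟩
    rcases h with ⟨h₁, h₂⟩ | ⟨h₁, h₂⟩ | ⟨h₁, h₂⟩ | ⟨h₁, h₂⟩ <;> simp_all

/-- The edge lengths of the spider graph: `{u, v_i}` has length `c - 1` and
`{v_i, w_i}` has length `1`. -/
noncomputable def spiderLen (c : ℝ) (l : ℕ) : SpiderV l → SpiderV l → ℝ :=
  fun a b =>
    match a, b with
    | none, _ => c - 1
    | _, none => c - 1
    | _, _ => 1

/-!
Every edge of the spider has length at least `1`, and distinct legs are at distance at least
`2c - 2 ≥ c` from each other. At a scale `r ≥ 1` a path of length more than `r` cannot stay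
inside one leg, so it passes through the centre `u`. At a scale `r < 1` the ball `B_{cr}(t)`
has radius less than `c`, and every edge inside it is incident to `t`, so `t` itself is the
hub. Conversely, at the scale `r = c / c' < 1` every edge `{v_i, w_i}` is a shortest path of
length `1 > r` inside `B_c(u)`, so a hitting set must meet every leg.
-/

section ShortestPathMetric

variable {G : SimpleGraph V} {len d : V → V → ℝ}

@[simp]
lemma wlen_nil (u : V) :
    wlen len (Walk.nil : G.Walk u u) = 0 := rfl

@[simp]
lemma wlen_cons {u x v : V} (h : G.Adj u x)
    (p : G.Walk x v) : wlen len (Walk.cons h p) = len u x + wlen len p := by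
  simp [wlen]

lemma wlen_append {u v w : V} (p : G.Walk u v) (q : G.Walk v w) :
    wlen len (p.append q) = wlen len p + wlen len q := by
  simp [wlen, Walk.darts_append]

lemma IsShortestPathMetric.dist_self_nonpos (hd : IsShortestPathMetric G len d) (v : V) :
    d v v ≤ 0 := by
  simpa using hd.1 v v Walk.nil

lemma IsShortestPathMetric.dist_le_len (hd : IsShortestPathMetric G len d) {u v : V}
    (h : G.Adj u v) : d u v ≤ len u v := by
  simpa using hd.1 u v h.toWalk

lemma IsShortestPathMetric.dist_triangle (hd : IsShortestPathMetric G len d) (u v w : V) :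
    d u w ≤ d u v + d v w := by
  obtain ⟨p, -, hp⟩ := hd.2 u v
  obtain ⟨q, -, hq⟩ := hd.2 v w
  simpa [wlen_append, hp, hq] using hd.1 u w (p.append q)

end ShortestPathMetric

namespace Spider

variable {l : ℕ} {c : ℝ} {d : SpiderV l → SpiderV l → ℝ}

lemma adj_center_inner (i : Fin l) : (spider l).Adj none (some (i, false)) :=
  ⟨i, Or.inl ⟨rfl, rfl⟩⟩

lemma adj_inner_outer (i : Fin l) : (spider l).Adj (some (i, false)) (some (i, true)) :=
  ⟨i, Or.inr (Or.inr (Or.inl ⟨rfl, rfl⟩))⟩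

noncomputable def depth (c : ℝ) : SpiderV l → ℝ
  | none => 0
  | some (_, false) => c - 1
  | some (_, true) => c

/-- The true shortest-path metric of the spider. -/
noncomputable def spiderDist (c : ℝ) : SpiderV l → SpiderV l → ℝ
  | some (i, b), some (j, b') =>
      if i = j then (if b = b' then 0 else 1) else depth c (some (i, b)) + depth c (some (j, b'))
  | x, y => depth c x + depth c y

lemma spiderDist_le_len_add (hc : 1 ≤ c) {x y : SpiderV l} (h : (spider l).Adj x y)
    (z : SpiderV l) : spiderDist c x z ≤ spiderLen c l x y + spiderDist c y z := by
  obtain ⟨i, hi⟩ := h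
  rcases hi with ⟨rfl, rfl⟩ | ⟨rfl, rfl⟩ | ⟨rfl, rfl⟩ | ⟨rfl, rfl⟩ <;>
    rcases z with _ | ⟨j, _ | _⟩ <;>
    simp only [spiderDist, depth, spiderLen] <;>
    (try split_ifs) <;>
    (try simp_all) <;>
    linarith

lemma spiderDist_le_wlen (hc : 1 ≤ c) {x y : SpiderV l} (w : (spider l).Walk x y) :
    spiderDist c x y ≤ wlen (spiderLen c l) w := by
  induction w with
  | @nil v => rcases v with _ | ⟨_, _ | _⟩ <;> simp [spiderDist, depth]
  | @cons x y z h p ih => rw [wlen_cons]; linarith [spiderDist_le_len_add hc h z]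

lemma eq_of_adj_of_adj_of_ne_none {x a b : SpiderV l} (hx : x ≠ none) (ha : (spider l).Adj x a)
    (hb : (spider l).Adj x b) (ha' : a ≠ none) (hb' : b ≠ none) : a = b := by
  obtain ⟨i, hi⟩ := ha
  obtain ⟨j, hj⟩ := hb
  rcases hi with ⟨e1, e2⟩ | ⟨e1, e2⟩ | ⟨e1, e2⟩ | ⟨e1, e2⟩ <;>
    rcases hj with ⟨f1, f2⟩ | ⟨f1, f2⟩ | ⟨f1, f2⟩ | ⟨f1, f2⟩ <;>
    simp_all

/-- Away from the centre the spider is a disjoint union of single edges of length `1`. -/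
lemma center_mem_support_of_one_lt {a b : SpiderV l} (w : (spider l).Walk a b)
    (hp : w.IsPath) (hw : 1 < wlen (spiderLen c l) w) : none ∈ w.support := by
  by_contra hn
  match w, hp, hw, hn with
  | .nil, _, hw, _ => simp at hw; linarith
  | .cons h .nil, _, hw, hn =>
    rcases a with _ | ⟨i, _⟩ <;> rcases b with _ | ⟨j, _⟩ <;> simp_all [spiderLen]
  | .cons h (.cons h' p), hp, _, hn =>
    simp only [Walk.support_cons, List.mem_cons, not_or] at hn
    obtain ⟨ha, hx, hy⟩ := hn
    have hya : _ = a := eq_of_adj_of_adj_of_ne_none (Ne.symm hx) h' h.symm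
      (fun e => hy (e ▸ p.start_mem_support)) (Ne.symm ha)
    rw [Walk.cons_isPath_iff] at hp
    exact hp.2 (by simp [← hya, p.start_mem_support])

lemma eq_or_eq_of_adj_of_spiderDist_lt (hc : 2 ≤ c) {x y : SpiderV l} (h : (spider l).Adj x y)
    (t : SpiderV l) (hx : spiderDist c x t < c) (hy : spiderDist c y t < c) : x = t ∨ y = t := by
  obtain ⟨i, hi⟩ := h
  rcases hi with ⟨rfl, rfl⟩ | ⟨rfl, rfl⟩ | ⟨rfl, rfl⟩ | ⟨rfl, rfl⟩ <;>
    rcases t with _ | ⟨j, _ | _⟩ <;>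
    simp only [spiderDist, depth] at hx hy <;>
    (try split_ifs at hx hy) <;>
    simp_all <;>
    linarith

lemma mem_support_of_spiderDist_lt (hc : 2 ≤ c) {a b : SpiderV l}
    (w : (spider l).Walk a b) (hw : 0 < wlen (spiderLen c l) w) (t : SpiderV l)
    (hsupp : ∀ x ∈ w.support, spiderDist c x t < c) : t ∈ w.support := by
  cases w with
  | nil => simp at hw
  | cons h p =>
    rcases eq_or_eq_of_adj_of_spiderDist_lt hc h t (hsupp _ (by simp))
      (hsupp _ (by simp [p.start_mem_support])) with rfl | rfl
    · simp
    · simp [p.start_mem_support]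

lemma spiderDist_le_dist (hc : 1 ≤ c) (hd : IsShortestPathMetric (spider l) (spiderLen c l) d)
    (x y : SpiderV l) : spiderDist c x y ≤ d x y := by
  obtain ⟨w, -, hw⟩ := hd.2 x y
  exact hw ▸ spiderDist_le_wlen hc w

lemma dist_inner_outer (hc : 1 ≤ c) (hd : IsShortestPathMetric (spider l) (spiderLen c l) d)
    (i : Fin l) : d (some (i, false)) (some (i, true)) = 1 := by
  have := spiderDist_le_dist hc hd (some (i, false)) (some (i, true))
  have := hd.dist_le_len (adj_inner_outer i)
  simp_all [spiderDist, spiderLen]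
  linarith

lemma dist_center_le (hc : 1 ≤ c) (hd : IsShortestPathMetric (spider l) (spiderLen c l) d)
    (t : SpiderV l) : d none t ≤ c := by
  rcases t with _ | ⟨i, _ | _⟩
  · linarith [hd.dist_self_nonpos none]
  · have := hd.dist_le_len (adj_center_inner i)
    simp only [spiderLen] at this
    linarith
  · have := hd.dist_le_len (adj_center_inner i)
    have := hd.dist_le_len (adj_inner_outer i)
    have := hd.dist_triangle none (some (i, false)) (some (i, true))
    simp only [spiderLen] at *
    linarith

lemma dist_to_center_le (hc : 1 ≤ c) (hd : IsShortestPathMetric (spider l) (spiderLen c l) d)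
    (t : SpiderV l) : d t none ≤ c := by
  rcases t with _ | ⟨i, _ | _⟩
  · linarith [hd.dist_self_nonpos none]
  · have := hd.dist_le_len (adj_center_inner i).symm
    simp only [spiderLen] at this
    linarith
  · have := hd.dist_le_len (adj_center_inner i).symm
    have := hd.dist_le_len (adj_inner_outer i).symm
    have := hd.dist_triangle (some (i, true)) (some (i, false)) none
    simp only [spiderLen] at *
    linarith

/-- The hub is the centre at scales `r ≥ 1` and the centre `t` of the ball at scales `r < 1`. -/
lemma exists_hub (hc : 2 ≤ c) (hd : IsShortestPathMetric (spider l) (spiderLen c l) d)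
    {r : ℝ} (hr : 0 < r) (t : SpiderV l) :
    ∃ h ∈ cball d t (c * r), ∀ (a b : SpiderV l) (w : (spider l).Walk a b),
      IsShortestPath (spiderLen c l) d w → (∀ x ∈ w.support, x ∈ cball d t (c * r)) →
      r < wlen (spiderLen c l) w → h ∈ w.support := by
  by_cases hr1 : 1 ≤ r
  · refine ⟨none, ?_, fun a b w hw _ hlen => center_mem_support_of_one_lt w hw.1 (by linarith)⟩
    calc d none t ≤ c := dist_center_le (by linarith) hd t
      _ ≤ c * r := le_mul_of_one_le_right (by linarith) hr1
  · have hcr : c * r < c := mul_lt_of_lt_one_right (by linarith) (not_le.mp hr1)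
    refine ⟨t, ?_, fun a b w _ hball hlen => ?_⟩
    · exact (hd.dist_self_nonpos t).trans (mul_pos (by linarith) hr).le
    · refine mem_support_of_spiderDist_lt hc w (by linarith) t fun x hx => ?_
      linarith [spiderDist_le_dist (by linarith) hd x t, show d x t ≤ c * r from hball x hx]

/-- At scale `r = c / c' < 1` the edge `{v_i, w_i}` is a shortest path of length `1 > r`
inside `B_c(u)`. -/
lemma inner_mem_or_outer_mem_of_hits (hc : 1 < c)
    (hd : IsShortestPathMetric (spider l) (spiderLen c l) d) {c' : ℝ} (hcc' : c < c')
    {H : Set (SpiderV l)}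
    (hH : ∀ (a b : SpiderV l) (w : (spider l).Walk a b),
      IsShortestPath (spiderLen c l) d w →
      (∀ x ∈ w.support, x ∈ cball d (none : SpiderV l) (c' * (c / c'))) →
      c / c' < wlen (spiderLen c l) w → ∃ h ∈ H, h ∈ w.support) (i : Fin l) :
    some (i, false) ∈ H ∨ some (i, true) ∈ H := by
  have hc' : 0 < c' := by linarith
  let e := (adj_inner_outer (l := l) i).toWalk
  have he : wlen (spiderLen c l) e = 1 := by simp [e, spiderLen]
  have hsp : IsShortestPath (spiderLen c l) d e :=
    ⟨by simp [e], by rw [he, dist_inner_outer hc.le hd]⟩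
  have hball : ∀ x ∈ e.support, x ∈ cball d none (c' * (c / c')) := by
    rw [mul_div_cancel₀ c hc'.ne']
    simpa [e, cball] using
      ⟨dist_to_center_le hc.le hd _, dist_to_center_le hc.le hd _⟩
  obtain ⟨h, hH, hh⟩ := hH _ _ e hsp hball (by rwa [he, div_lt_one hc'])
  simp only [e, Adj.toWalk, Walk.support_cons, Walk.support_nil, List.mem_cons,
    List.not_mem_nil, or_false] at hh
  rcases hh with rfl | rfl
  · exact Or.inl hH
  · exact Or.inr hH

end Spider

theorem statement15_general (c : ℝ) (hc : 4 < c) (l : ℕ)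
    (d : SpiderV l → SpiderV l → ℝ)
    (hmetric : IsShortestPathMetric (spider l) (spiderLen c l) d) :
    (∀ r : ℝ, 0 < r → ∀ t : SpiderV l,
      ∃ h ∈ cball d t (c * r),
        ∀ (a b : SpiderV l) (w : (spider l).Walk a b),
          IsShortestPath (spiderLen c l) d w →
          (∀ x ∈ w.support, x ∈ cball d t (c * r)) →
          r < wlen (spiderLen c l) w → h ∈ w.support) ∧
    (∀ c' : ℝ, c < c' → ∀ H : Set (SpiderV l),
      (∀ (a b : SpiderV l) (w : (spider l).Walk a b),
        IsShortestPath (spiderLen c l) d w →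
        (∀ x ∈ w.support, x ∈ cball d (none : SpiderV l) (c' * (c / c'))) →
        c / c' < wlen (spiderLen c l) w → ∃ h ∈ H, h ∈ w.support) →
      ∀ i : Fin l, some (i, false) ∈ H ∨ some (i, true) ∈ H) :=
  ⟨fun _ hr t => Spider.exists_hub (by linarith) hmetric hr t,
    fun _ hcc' _ hH => Spider.inner_mem_or_outer_mem_of_hits (by linarith) hmetric hcc' hH⟩

/-- Lemma 46 of the paper: for every `c > 4` the spider graph
`G_l` has highway dimension `1` with respect to `c` (for every `r > 0` and every
ball `B_{cr}(t)`, a single vertex of the ball hits all shortest paths lying inside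
`B_{cr}(t)` of length more than `r`), while for every `c' > c` and `r = c/c'`, any
set of vertices hitting all shortest paths lying inside `B_{c'r}(u)` of length more
than `r` must contain `v_i` or `w_i` for every `i` (so the highway dimension with
respect to `c'` is at least `l`). -/
theorem statement15 (c : ℝ) (hc : 4 < c) (l : ℕ) (hl : 1 ≤ l)
    (d : SpiderV l → SpiderV l → ℝ)
    (hmetric : IsShortestPathMetric (spider l) (spiderLen c l) d) :
    (∀ r : ℝ, 0 < r → ∀ t : SpiderV l,
      ∃ h ∈ cball d t (c * r),
        ∀ (a b : SpiderV l) (w : (spider l).Walk a b),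
          IsShortestPath (spiderLen c l) d w →
          (∀ x ∈ w.support, x ∈ cball d t (c * r)) →
          r < wlen (spiderLen c l) w → h ∈ w.support) ∧
    (∀ c' : ℝ, c < c' → ∀ H : Set (SpiderV l),
      (∀ (a b : SpiderV l) (w : (spider l).Walk a b),
        IsShortestPath (spiderLen c l) d w →
        (∀ x ∈ w.support, x ∈ cball d (none : SpiderV l) (c' * (c / c'))) →
        c / c' < wlen (spiderLen c l) w → ∃ h ∈ H, h ∈ w.support) →
      ∀ i : Fin l, some (i, false) ∈ H ∨ some (i, true) ∈ H) :=
  statement15_general c hc l d hmetric
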